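/- Let 𝓜 = { mfi(minidx(P), i) : i ∈ [1,n] }. Every minimal occurrence interval [ℓ, r] for P over T belongs to 𝓜, i.e., [ℓ, r] = mfi(minidx(P), i) for some i ∈ [1,n]. -/

import Mathlib

/-!
At the root `v = minidx(P)` of `CT(P)` we have `P_v = P`, so a fixed-interval with pivot
`(v, i)` is exactly an occurrence interval witnessed by a trace whose minimum sits at text
position `i`. Every occurrence interval is therefore a fixed-interval for the pivot at the
minimum of one of its traces, and every fixed-interval at the root is an occurrence interval,
so minimality transfers from occurrence intervals to fixed-intervals.
-/

/-- Ordered binary trees (possibly empty). -/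
inductive BTree : Type
  | nil : BTree
  | node : BTree → BTree → BTree
  deriving DecidableEq

/-- The minimum value of a list of integers (with default `0` for the empty list). -/
noncomputable def minval (l : List ℤ) : ℤ := l.minimum.untopD 0

/-- The 0-based index of the leftmost occurrence of the minimum value. -/
noncomputable def minidx0 (l : List ℤ) : ℕ := l.idxOf (minval l)

theorem minidx0_lt_length {l : List ℤ} (h : l ≠ []) : minidx0 l < l.length := by
  obtain ⟨a, ha⟩ := WithTop.ne_top_iff_exists.mp (List.minimum_ne_top_of_ne_nil h)
  have hmem : a ∈ l := List.minimum_mem ha.symm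
  have hval : minval l = a := by simp [minval, ← ha]
  rw [minidx0, hval]
  exact List.idxOf_lt_length_iff.mpr hmem

/-- The Cartesian tree of a string of integers. -/
noncomputable def CT (l : List ℤ) : BTree :=
  if h : l = [] then .nil
  else .node (CT (l.take (minidx0 l))) (CT (l.drop (minidx0 l + 1)))
termination_by l.length
decreasing_by
  · have := minidx0_lt_length h
    simp [List.length_take]
    omega
  · have : 0 < l.length := List.length_pos_iff.mpr h
    simp [List.length_drop]
    omega

/-- The value of the 1-based position `i` of the string `T` (default `0`). -/
def val (T : List ℤ) (i : ℕ) : ℤ := T.getD (i - 1) 0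

/-- `IsSubSeq n m I` : `I` is a strictly increasing sequence of `m` subscripts in `[1, n]`. -/
def IsSubSeq (n m : ℕ) (I : List ℕ) : Prop :=
  I.length = m ∧ I.Pairwise (· < ·) ∧ ∀ j ∈ I, 1 ≤ j ∧ j ≤ n

/-- The subsequence `T_I` of `T` selected by the (1-based) subscript sequence `I`. -/
def seqAt (T : List ℤ) (I : List ℕ) : List ℤ := I.map (val T)

/-- The substring `P[a..b]` of `P` (1-based, inclusive). -/
def subslice (P : List ℤ) (a b : ℕ) : List ℤ := (P.take b).drop (a - 1)

/-- The left end of the maximal interval around position `v` in which `P[v]` is minimal: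
one plus the rightmost position `j < v` carrying a value smaller than `P[v]` (or `1`). -/
def leftEnd (P : List ℤ) (v : ℕ) : ℕ :=
  (((Finset.Icc 1 (v - 1)).filter (fun j => val P j < val P v)).max.unbotD 0) + 1

/-- The right end of the maximal interval around position `v` in which `P[v]` is minimal:
the leftmost position `j > v` carrying a value smaller than `P[v]`, minus one (or `|P|`). -/
def rightEnd (P : List ℤ) (v : ℕ) : ℕ :=
  (((Finset.Icc (v + 1) P.length).filter (fun j => val P j < val P v)).min.untopD
    (P.length + 1)) - 1

/-- `P_v`: the substring of `P` spanned by the subtree of `CT(P)` rooted at node `v`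
(nodes are identified with 1-based positions of `P`). -/
def Psub (P : List ℤ) (v : ℕ) : List ℤ := subslice P (leftEnd P v) (rightEnd P v)

/-- The left child `v.L` of node `v` in `CT(P)` (as a 1-based position), if it exists. -/
noncomputable def leftChild (P : List ℤ) (v : ℕ) : Option ℕ :=
  if leftEnd P v < v then some (leftEnd P v + minidx0 (subslice P (leftEnd P v) (v - 1)))
  else none

/-- The right child `v.R` of node `v` in `CT(P)` (as a 1-based position), if it exists. -/
noncomputable def rightChild (P : List ℤ) (v : ℕ) : Option ℕ :=
  if v < rightEnd P v then some (v + 1 + minidx0 (subslice P (v + 1) (rightEnd P v)))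
  else none

/-- `[ℓ, r]` is a fixed-interval with pivot `(v, i)`. -/
def IsFixedInterval (T P : List ℤ) (v i ℓ r : ℕ) : Prop :=
  1 ≤ ℓ ∧ r ≤ T.length ∧
    ∃ I : List ℕ, IsSubSeq T.length (Psub P v).length I ∧ i ∈ I ∧
      (∀ j ∈ I, ℓ ≤ j ∧ j ≤ r) ∧ CT (seqAt T I) = CT (Psub P v) ∧
      val T i = minval (seqAt T I)

/-- `IntervalSsubset (ℓ', r') (ℓ, r)` : the interval `[ℓ', r']` is strictly contained
in the interval `[ℓ, r]`. -/
def IntervalSsubset (p q : ℕ × ℕ) : Prop := q.1 ≤ p.1 ∧ p.2 ≤ q.2 ∧ p ≠ q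

/-- `[ℓ, r]` is a minimal fixed-interval with pivot `(v, i)`. -/
def IsMinFixedInterval (T P : List ℤ) (v i ℓ r : ℕ) : Prop :=
  IsFixedInterval T P v i ℓ r ∧
    ¬∃ ℓ' r', IsFixedInterval T P v i ℓ' r' ∧ IntervalSsubset (ℓ', r') (ℓ, r)

open Classical in
/-- The left endpoint `L(v, i)` of the minimal fixed-interval `mfi(v, i)`,
which is `-∞` (i.e. `⊥`) if no (minimal) fixed-interval with pivot `(v, i)` exists. -/
noncomputable def mfiL (T P : List ℤ) (v i : ℕ) : WithBot ℕ :=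
  if h : ∃ ℓ r, IsMinFixedInterval T P v i ℓ r then (h.choose : WithBot ℕ) else ⊥

open Classical in
/-- The right endpoint `R(v, i)` of the minimal fixed-interval `mfi(v, i)`,
which is `∞` (i.e. `⊤`) if no (minimal) fixed-interval with pivot `(v, i)` exists. -/
noncomputable def mfiR (T P : List ℤ) (v i : ℕ) : WithTop ℕ :=
  if h : ∃ ℓ r, IsMinFixedInterval T P v i ℓ r then (h.choose_spec.choose : WithTop ℕ) else ⊤

/-- `I` is a trace of pattern `P` in text `T`. -/
def IsTrace (T P : List ℤ) (I : List ℕ) : Prop :=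
  IsSubSeq T.length P.length I ∧ CT (seqAt T I) = CT P

/-- `[ℓ, r]` is an occurrence interval for `P` over `T`. -/
def IsOccInterval (T P : List ℤ) (ℓ r : ℕ) : Prop :=
  1 ≤ ℓ ∧ r ≤ T.length ∧ ∃ I, IsTrace T P I ∧ ∀ j ∈ I, ℓ ≤ j ∧ j ≤ r

/-- `[ℓ, r]` is a minimal occurrence interval for `P` over `T`. -/
def IsMinOccInterval (T P : List ℤ) (ℓ r : ℕ) : Prop :=
  IsOccInterval T P ℓ r ∧
    ¬∃ ℓ' r', IsOccInterval T P ℓ' r' ∧ IntervalSsubset (ℓ', r') (ℓ, r)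

lemma minimum_eq_coe_minval {l : List ℤ} (hl : l ≠ []) : l.minimum = (minval l : WithTop ℤ) := by
  obtain ⟨a, ha⟩ := WithTop.ne_top_iff_exists.mp (List.minimum_ne_top_of_ne_nil hl)
  simp [minval, ← ha]

lemma minval_mem {l : List ℤ} (hl : l ≠ []) : minval l ∈ l :=
  List.minimum_mem (minimum_eq_coe_minval hl)

lemma minval_le_of_mem {l : List ℤ} {a : ℤ} (ha : a ∈ l) : minval l ≤ a := by
  have := List.minimum_le_of_mem' ha
  rwa [minimum_eq_coe_minval (List.ne_nil_of_mem ha), WithTop.coe_le_coe] at this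

lemma val_mem {l : List ℤ} {j : ℕ} (h1 : 1 ≤ j) (h2 : j ≤ l.length) : val l j ∈ l := by
  rw [val, List.getD_eq_getElem _ _ (by omega)]
  exact List.getElem_mem _

lemma val_minidx0_succ {P : List ℤ} (hP : P ≠ []) : val P (minidx0 P + 1) = minval P := by
  have hlt := minidx0_lt_length hP
  rw [val, Nat.add_sub_cancel, List.getD_eq_getElem _ _ hlt]
  exact List.getElem_idxOf hlt

lemma leftEnd_minidx0_succ {P : List ℤ} (hP : P ≠ []) : leftEnd P (minidx0 P + 1) = 1 := by
  have hlt := minidx0_lt_length hP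
  have : (Finset.Icc 1 (minidx0 P + 1 - 1)).filter
      (fun j => val P j < val P (minidx0 P + 1)) = ∅ := by
    refine Finset.filter_eq_empty_iff.mpr fun j hj => ?_
    rw [Finset.mem_Icc] at hj
    rw [val_minidx0_succ hP, not_lt]
    exact minval_le_of_mem (val_mem hj.1 (by omega))
  rw [leftEnd, this]
  rfl

lemma rightEnd_minidx0_succ {P : List ℤ} (hP : P ≠ []) :
    rightEnd P (minidx0 P + 1) = P.length := by
  have : (Finset.Icc (minidx0 P + 1 + 1) P.length).filter
      (fun j => val P j < val P (minidx0 P + 1)) = ∅ := by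
    refine Finset.filter_eq_empty_iff.mpr fun j hj => ?_
    rw [Finset.mem_Icc] at hj
    rw [val_minidx0_succ hP, not_lt]
    exact minval_le_of_mem (val_mem (by omega) hj.2)
  rw [rightEnd, this]
  rfl

lemma Psub_minidx0_succ {P : List ℤ} (hP : P ≠ []) : Psub P (minidx0 P + 1) = P := by
  simp [Psub, leftEnd_minidx0_succ hP, rightEnd_minidx0_succ hP, subslice]

lemma IsFixedInterval.isOccInterval {T P : List ℤ} {i ℓ r : ℕ} (hP : P ≠ [])
    (h : IsFixedInterval T P (minidx0 P + 1) i ℓ r) : IsOccInterval T P ℓ r := by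
  obtain ⟨hℓ, hr, I, hI, -, hIℓr, hCT, -⟩ := h
  rw [Psub_minidx0_succ hP] at hI hCT
  exact ⟨hℓ, hr, I, ⟨hI, hCT⟩, hIℓr⟩

lemma IsOccInterval.exists_isFixedInterval {T P : List ℤ} {ℓ r : ℕ} (hP : P ≠ [])
    (h : IsOccInterval T P ℓ r) :
    ∃ i, 1 ≤ i ∧ i ≤ T.length ∧ IsFixedInterval T P (minidx0 P + 1) i ℓ r := by
  obtain ⟨hℓ, hr, I, ⟨hI, hCT⟩, hIℓr⟩ := h
  have hTI : seqAt T I ≠ [] := by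
    intro h
    rw [seqAt, List.map_eq_nil_iff] at h
    exact hP (List.length_eq_zero_iff.mp (by rw [← hI.1, h, List.length_nil]))
  obtain ⟨i, hiI, hi⟩ := List.mem_map.mp (minval_mem hTI)
  refine ⟨i, (hI.2.2 i hiI).1, (hI.2.2 i hiI).2, hℓ, hr, I, ?_, hiI, hIℓr, ?_, hi⟩
  all_goals rwa [Psub_minidx0_succ hP]

theorem minimal_occurrence_mem_M_general
    (T P : List ℤ)
    (hm : 1 ≤ P.length)
    (ℓ r : ℕ) (h : IsMinOccInterval T P ℓ r) :
    ∃ i, 1 ≤ i ∧ i ≤ T.length ∧ IsMinFixedInterval T P (minidx0 P + 1) i ℓ r := by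
  have hP : P ≠ [] := List.ne_nil_of_length_pos hm
  obtain ⟨hocc, hmin⟩ := h
  obtain ⟨i, hi1, hiT, hfix⟩ := hocc.exists_isFixedInterval hP
  refine ⟨i, hi1, hiT, hfix, ?_⟩
  rintro ⟨ℓ', r', hfix', hsub⟩
  exact hmin ⟨ℓ', r', hfix'.isOccInterval hP, hsub⟩

/-- Every minimal occurrence interval `[ℓ, r]` for `P` over `T` belongs to
`𝓜 = { mfi(minidx(P), i) : i ∈ [1,n] }`, i.e., `[ℓ, r] = mfi(minidx(P), i)` for some
`i ∈ [1,n]` (here `minidx0 P + 1` is the 1-based position of the minimum of `P`, that is,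
the root of `CT(P)`). -/
theorem minimal_occurrence_mem_M
    (T P : List ℤ) (hT : T.Nodup) (hP : P.Nodup)
    (hm : 1 ≤ P.length) (hmn : P.length ≤ T.length)
    (ℓ r : ℕ) (h : IsMinOccInterval T P ℓ r) :
    ∃ i, 1 ≤ i ∧ i ≤ T.length ∧ IsMinFixedInterval T P (minidx0 P + 1) i ℓ r :=
  minimal_occurrence_mem_M_general T P hm ℓ r h
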